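/- Let G and H be semigroups and let G 𝔰 H denote the stack of G on H: the semigroup on the disjoint union Sum G H whose multiplication extends those of G and H and satisfies g*h = h*g = g for all g ∈ G and h ∈ H (concretely: inl g * inl g' = inl (g*g'), inr h * inr h' = inr (h*h'), inl g * inr h = inl g, and inr h * inl g = inl g). Then a partition 𝒮 of G 𝔰 H into nonempty finite blocks is a Schur ring over G 𝔰 H if and only if every block of 𝒮 is contained in the copy of G or in the copy of H, the blocks contained in the copy of G form a Schur ring over G, and the blocks contained in the copy of H form a Schur ring over H. -/

import Mathlib

open scoped Pointwise

/-- The simple quantity `[X] = ∑_{x ∈ X} x` in the semigroup algebra `MonoidAlgebra ℚ G`. -/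
noncomputable def simpleQty {G : Type*} [Mul G] (X : Finset G) : MonoidAlgebra ℚ G :=
  ∑ x ∈ X, MonoidAlgebra.single x (1 : ℚ)

/-- A partition of `G` into nonempty finite blocks. -/
def IsPartition {G : Type*} (S : Set (Set G)) : Prop :=
  (∀ X ∈ S, X.Nonempty ∧ X.Finite) ∧ ∀ x : G, ∃! X, X ∈ S ∧ x ∈ X

/-- The ℚ-linear span of the simple quantities of the blocks of `S`. -/
noncomputable def schurSpan {G : Type*} [Mul G] (S : Set (Set G)) :
    Submodule ℚ (MonoidAlgebra ℚ G) :=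
  Submodule.span ℚ { z | ∃ X ∈ S, ∃ hX : X.Finite, z = simpleQty hX.toFinset }

/-- A Schur ring over the semigroup `G`. -/
def IsSchurRing {G : Type*} [Semigroup G] (S : Set (Set G)) : Prop :=
  IsPartition S ∧ ∀ X ∈ S, ∀ Y ∈ S, ∀ (hX : X.Finite) (hY : Y.Finite),
    simpleQty hX.toFinset * simpleQty hY.toFinset ∈ schurSpan S

/-- `A` is an `S`-subset: a union of blocks of `S`. -/
def IsSUnion {G : Type*} (S : Set (Set G)) (A : Set G) : Prop :=
  ∀ X ∈ S, X ⊆ A ∨ X ∩ A = ∅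

/-- The multiplication of the stack `G 𝔰 H`: it extends the multiplications of `G` and
`H`, and `g*h = h*g = g` for `g ∈ G`, `h ∈ H`. -/
def stackMul {G H : Type*} [Mul G] [Mul H] : G ⊕ H → G ⊕ H → G ⊕ H
  | .inl g, .inl g' => .inl (g * g')
  | .inr h, .inr h' => .inr (h * h')
  | .inl g, .inr _ => .inl g
  | .inr _, .inl g => .inl g

instance stackSemigroup {G H : Type*} [Semigroup G] [Semigroup H] : Semigroup (G ⊕ H) where
  mul := stackMul
  mul_assoc := by
    rintro (a | a) (b | b) (c | c) <;>
      first
        | exact congrArg Sum.inl (mul_assoc a b c)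
        | exact congrArg Sum.inr (mul_assoc a b c)
        | rfl

/- ### Auxiliary lemmas -/

open scoped Classical in
lemma simpleQty_apply {G : Type*} [Mul G] (X : Finset G) (y : G) :
    (simpleQty X).coeff y = if y ∈ X then (1:ℚ) else 0 := by
  rw [simpleQty, MonoidAlgebra.coeff_sum, Finsupp.finset_sum_apply]
  rw [show (fun x => (MonoidAlgebra.single x (1:ℚ)).coeff y) = fun x => if x = y then (1:ℚ) else 0
    from funext fun x => MonoidAlgebra.coeff_single_apply]
  rw [Finset.sum_ite_eq' X y (fun _ => (1:ℚ))]

lemma simpleQty_mul {G : Type*} [Mul G] (X Y : Finset G) :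
    simpleQty X * simpleQty Y
      = ∑ x ∈ X, ∑ y ∈ Y, MonoidAlgebra.single (x * y) (1:ℚ) := by
  rw [simpleQty, simpleQty, Finset.sum_mul_sum]
  simp only [MonoidAlgebra.single_mul_single, one_mul]

lemma mem_schurSpan_iff {G : Type*} [Mul G] {S : Set (Set G)} (hS : IsPartition S)
    (z : MonoidAlgebra ℚ G) :
    z ∈ schurSpan S ↔ ∀ X ∈ S, ∀ a ∈ X, ∀ b ∈ X, z.coeff a = z.coeff b := by
  classical
  constructor
  · intro hz X hX a ha b hb
    induction hz using Submodule.span_induction with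
    | mem w hw =>
      obtain ⟨X', hX', hfin, rfl⟩ := hw
      rw [simpleQty_apply, simpleQty_apply]
      by_cases h : a ∈ X'
      · have hXX : X = X' := ((hS.2 a).unique ⟨hX, ha⟩ ⟨hX', h⟩)
        rw [if_pos (hfin.mem_toFinset.mpr h),
          if_pos (hfin.mem_toFinset.mpr (hXX ▸ hb))]
      · have h' : b ∉ X' := fun hb' =>
          h (((hS.2 b).unique ⟨hX, hb⟩ ⟨hX', hb'⟩) ▸ ha)
        rw [if_neg (fun hh => h (hfin.mem_toFinset.mp hh)),
          if_neg (fun hh => h' (hfin.mem_toFinset.mp hh))]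
    | zero => rfl
    | add w₁ w₂ h₁ h₂ ih₁ ih₂ =>
      show w₁.coeff a + w₂.coeff a = w₁.coeff b + w₂.coeff b
      rw [ih₁, ih₂]
    | smul c w hw ih =>
      show c * w.coeff a = c * w.coeff b
      rw [ih]
  · intro hconst
    have blk : ∀ x : G, ∃ X, X ∈ S ∧ x ∈ X := fun x => (hS.2 x).exists
    set B : G → Set G := fun x => (blk x).choose with hB
    have hBmem : ∀ x, B x ∈ S ∧ x ∈ B x := fun x => (blk x).choose_spec
    set T : Finset (Set G) := z.coeff.support.image B with hT
    have hTS : ∀ X ∈ T, X ∈ S := by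
      intro X hX
      obtain ⟨x, -, rfl⟩ := Finset.mem_image.mp hX
      exact (hBmem x).1
    set F : Set G → MonoidAlgebra ℚ G :=
      fun X => if h : X.Finite then simpleQty h.toFinset else 0 with hF
    set c : Set G → ℚ := fun X => if h : X.Nonempty then z.coeff h.some else 0 with hc
    have key : z = ∑ X ∈ T, c X • F X := by
      ext w
      rw [MonoidAlgebra.coeff_sum, Finsupp.finset_sum_apply]
      have term : ∀ X ∈ T, (c X • F X).coeff w = if w ∈ X then z.coeff w else 0 := by
        intro X hXT
        have hXS := hTS X hXT
        have hfin := (hS.1 X hXS).2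
        have hne := (hS.1 X hXS).1
        have e1 : (c X • F X).coeff w = c X * (F X).coeff w := rfl
        rw [e1, hF, hc]
        simp only [dif_pos hfin, dif_pos hne]
        rw [simpleQty_apply]
        by_cases h : w ∈ X
        · rw [if_pos (hfin.mem_toFinset.mpr h), if_pos h, mul_one]
          exact hconst X hXS hne.some hne.some_mem w h
        · rw [if_neg (fun hh => h (hfin.mem_toFinset.mp hh)), if_neg h, mul_zero]
      rw [Finset.sum_congr rfl term]
      by_cases hzw : z.coeff w = 0
      · rw [hzw, Finset.sum_eq_zero]
        intro X _
        split <;> rfl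
      · have hwsup : w ∈ z.coeff.support := Finsupp.mem_support_iff.mpr hzw
        have hBwT : B w ∈ T := Finset.mem_image_of_mem B hwsup
        rw [Finset.sum_eq_single (B w)]
        · rw [if_pos (hBmem w).2]
        · intro X hXT hne
          rw [if_neg]
          intro hwX
          exact hne ((hS.2 w).unique ⟨hTS X hXT, hwX⟩ ⟨(hBmem w).1, (hBmem w).2⟩)
        · intro h; exact absurd hBwT h
    rw [key]
    refine Submodule.sum_mem _ fun X hXT => Submodule.smul_mem _ _ ?_
    refine Submodule.subset_span ?_
    have hXS := hTS X hXT
    have hfin := (hS.1 X hXS).2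
    exact ⟨X, hXS, hfin, by rw [hF]; simp only [dif_pos hfin]⟩

lemma mapDomain_simpleQty {G K : Type*} [Mul G] [Mul K] [DecidableEq K] {f : G → K}
    (hf : Function.Injective f) (X : Finset G) :
    MonoidAlgebra.mapDomain f (simpleQty X) = simpleQty (X.image f) := by
  rw [simpleQty, simpleQty, Finset.sum_image (fun a _ b _ h => hf h)]
  apply MonoidAlgebra.coeff_injective
  simp only [MonoidAlgebra.mapDomain, MonoidAlgebra.coeff_ofCoeff, MonoidAlgebra.coeff_sum,
    Finsupp.mapDomain_finset_sum, MonoidAlgebra.coeff_single, Finsupp.mapDomain_single]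

/-- `Finsupp.mapDomain` with codomain ascribed to the monoid algebra. -/
noncomputable def mdQ {K L : Type*} (f : K → L) (z : MonoidAlgebra ℚ K) :
    MonoidAlgebra ℚ L :=
  MonoidAlgebra.mapDomain f z

lemma simpleQty_image {K L : Type*} [Mul K] [Mul L] {f : K → L} (hf : Function.Injective f)
    {A : Set K} (hA : A.Finite) :
    mdQ f (simpleQty hA.toFinset) = simpleQty ((hA.image f).toFinset) := by
  classical
  rw [mdQ, mapDomain_simpleQty hf]
  congr 1
  ext x
  simp [Set.Finite.mem_toFinset]

/-- Transfer of Schur-span membership along an injective multiplicative embedding whose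
range is a union of blocks. -/
lemma schur_transfer {K L : Type*} [Mul K] [Mul L] {f : K → L} (hf : Function.Injective f)
    {S : Set (Set L)} (hS : IsPartition S)
    (hpure : ∀ X ∈ S, X ⊆ Set.range f ∨ ∀ x ∈ X, x ∉ Set.range f) :
    IsPartition {A : Set K | f '' A ∈ S} ∧
      ∀ z : MonoidAlgebra ℚ K,
        (z ∈ schurSpan {A : Set K | f '' A ∈ S} ↔ mdQ f z ∈ schurSpan S) := by
  have hpart : IsPartition {A : Set K | f '' A ∈ S} := by
    constructor
    · intro A hA
      obtain ⟨hne, hfin⟩ := hS.1 _ hA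
      exact ⟨Set.image_nonempty.mp hne, Set.Finite.of_finite_image hfin hf.injOn⟩
    · intro x
      obtain ⟨X, ⟨hXS, hxX⟩, huniq⟩ := hS.2 (f x)
      rcases hpure X hXS with hsub | hnot
      · refine ⟨f ⁻¹' X, ⟨?_, hxX⟩, ?_⟩
        · show f '' (f ⁻¹' X) ∈ S
          rw [Set.image_preimage_eq_of_subset hsub]; exact hXS
        · rintro A' ⟨hA'S, hxA'⟩
          have hA'X : f '' A' = X := huniq _ ⟨hA'S, ⟨x, hxA', rfl⟩⟩
          rw [← hA'X, Set.preimage_image_eq _ hf]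
      · exact absurd ⟨x, rfl⟩ (hnot _ hxX)
  refine ⟨hpart, fun z => ?_⟩
  rw [mem_schurSpan_iff hpart, mem_schurSpan_iff hS]
  show _ ↔ ∀ X ∈ S, ∀ a ∈ X, ∀ b ∈ X,
    Finsupp.mapDomain f z.coeff a = Finsupp.mapDomain f z.coeff b
  constructor
  · intro hc X hXS a ha b hb
    rcases hpure X hXS with hsub | hnot
    · obtain ⟨a', rfl⟩ := hsub ha
      obtain ⟨b', rfl⟩ := hsub hb
      rw [Finsupp.mapDomain_apply hf, Finsupp.mapDomain_apply hf]
      have hXmem : (f ⁻¹' X) ∈ {A : Set K | f '' A ∈ S} := by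
        show f '' (f ⁻¹' X) ∈ S
        rw [Set.image_preimage_eq_of_subset hsub]; exact hXS
      exact hc _ hXmem a' ha b' hb
    · rw [Finsupp.mapDomain_notin_range _ _ (hnot _ ha),
        Finsupp.mapDomain_notin_range _ _ (hnot _ hb)]
  · intro hc A hA a ha b hb
    have h1 := hc (f '' A) hA (f a) ⟨a, ha, rfl⟩ (f b) ⟨b, hb, rfl⟩
    rwa [Finsupp.mapDomain_apply hf, Finsupp.mapDomain_apply hf] at h1

/-- `Sum.inl` as a `MulHom` into the stack. -/
def inlHom (G H : Type*) [Semigroup G] [Semigroup H] : G →ₙ* (G ⊕ H) :=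
  ⟨Sum.inl, fun _ _ => rfl⟩

/-- `Sum.inr` as a `MulHom` into the stack. -/
def inrHom (G H : Type*) [Semigroup G] [Semigroup H] : H →ₙ* (G ⊕ H) :=
  ⟨Sum.inr, fun _ _ => rfl⟩

lemma mapDomain_inl_mul {G H : Type*} [Semigroup G] [Semigroup H] (x y : MonoidAlgebra ℚ G) :
    mdQ (Sum.inl : G → G ⊕ H) (x * y) = mdQ Sum.inl x * mdQ Sum.inl y :=
  MonoidAlgebra.mapDomain_mul (inlHom G H) x y

lemma mapDomain_inr_mul {G H : Type*} [Semigroup G] [Semigroup H] (x y : MonoidAlgebra ℚ H) :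
    mdQ (Sum.inr : H → G ⊕ H) (x * y) = mdQ Sum.inr x * mdQ Sum.inr y :=
  MonoidAlgebra.mapDomain_mul (inrHom G H) x y

lemma stack_purity {G H : Type*} [Semigroup G] [Semigroup H]
    {S : Set (Set (G ⊕ H))} (hS : IsPartition S) (hSR : IsSchurRing S) :
    ∀ X ∈ S, X ⊆ Set.range Sum.inl ∨ X ⊆ Set.range Sum.inr := by
  classical
  intro X hX
  by_contra hcon
  push_neg at hcon
  obtain ⟨a, haX, ha⟩ := Set.not_subset.mp hcon.1
  obtain ⟨b, hbX, hb⟩ := Set.not_subset.mp hcon.2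
  obtain ⟨h0, rfl⟩ : ∃ h0 : H, a = Sum.inr h0 := by
    cases a with
    | inl g => exact absurd ⟨g, rfl⟩ ha
    | inr h => exact ⟨h, rfl⟩
  obtain ⟨g0, rfl⟩ : ∃ g0 : G, b = Sum.inl g0 := by
    cases b with
    | inl g => exact ⟨g, rfl⟩
    | inr h => exact absurd ⟨h, rfl⟩ hb
  have hfin := (hS.1 X hX).2
  set F := hfin.toFinset with hFdef
  set z := simpleQty F * simpleQty F with hzdef
  have hconst := (mem_schurSpan_iff hS z).mp (hSR.2 X hX X hX hfin hfin) X hX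
  have zval : ∀ w, z.coeff w = ∑ p ∈ F ×ˢ F, (if p.1 * p.2 = w then (1:ℚ) else 0) := by
    intro w
    rw [hzdef, simpleQty_mul, Finset.sum_product, MonoidAlgebra.coeff_sum, Finsupp.finset_sum_apply]
    exact Finset.sum_congr rfl fun x _ => by
      rw [MonoidAlgebra.coeff_sum, Finsupp.finset_sum_apply]
      exact Finset.sum_congr rfl fun y _ => MonoidAlgebra.coeff_single_apply
  set XH := F.filter (fun w => ∃ h : H, w = Sum.inr h) with hXHdef
  have hh0 : (Sum.inr h0 : G ⊕ H) ∈ XH :=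
    Finset.mem_filter.mpr ⟨hfin.mem_toFinset.mpr haX, ⟨h0, rfl⟩⟩
  have hg0F : (Sum.inl g0 : G ⊕ H) ∈ F := hfin.mem_toFinset.mpr hbX
  have boundA : (XH.card : ℚ) + 1 ≤ z.coeff (Sum.inl g0) := by
    rw [zval]
    set s : Finset ((G ⊕ H) × (G ⊕ H)) :=
      insert (Sum.inr h0, Sum.inl g0) (XH.image fun y => (Sum.inl g0, y)) with hs
    have hsub : s ⊆ F ×ˢ F := by
      intro p hp
      rcases Finset.mem_insert.mp hp with rfl | hp
      · exact Finset.mem_product.mpr ⟨hfin.mem_toFinset.mpr haX, hg0F⟩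
      · obtain ⟨y, hy, rfl⟩ := Finset.mem_image.mp hp
        exact Finset.mem_product.mpr ⟨hg0F, (Finset.mem_filter.mp hy).1⟩
    have hone : ∀ p ∈ s, (if p.1 * p.2 = Sum.inl g0 then (1:ℚ) else 0) = 1 := by
      intro p hp
      rcases Finset.mem_insert.mp hp with rfl | hp
      · exact if_pos rfl
      · obtain ⟨y, hy, rfl⟩ := Finset.mem_image.mp hp
        obtain ⟨h', rfl⟩ := (Finset.mem_filter.mp hy).2
        exact if_pos rfl
    have hcards : s.card = XH.card + 1 := by
      rw [hs, Finset.card_insert_of_notMem, Finset.card_image_of_injective]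
      · intro y₁ y₂ hyy
        exact (Prod.mk.injEq _ _ _ _).mp hyy |>.2
      · intro hmem
        obtain ⟨y, -, hyeq⟩ := Finset.mem_image.mp hmem
        simp at hyeq
    calc (XH.card : ℚ) + 1
        = ∑ p ∈ s, (if p.1 * p.2 = Sum.inl g0 then (1:ℚ) else 0) := by
          rw [Finset.sum_congr rfl hone, Finset.sum_const, hcards, nsmul_eq_mul, mul_one]
          push_cast; ring
      _ ≤ ∑ p ∈ F ×ˢ F, (if p.1 * p.2 = Sum.inl g0 then (1:ℚ) else 0) :=
          Finset.sum_le_sum_of_subset_of_nonneg hsub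
            (fun p _ _ => by split <;> norm_num)
  have hsum : ∑ w ∈ XH, z.coeff w = (XH.card : ℚ) * z.coeff (Sum.inl g0) := by
    rw [Finset.sum_congr rfl
      (fun w hw => hconst w (hfin.mem_toFinset.mp (Finset.mem_filter.mp hw).1) (Sum.inl g0) hbX),
      Finset.sum_const, nsmul_eq_mul]
  have boundB : ∑ w ∈ XH, z.coeff w ≤ (XH.card : ℚ) * XH.card := by
    have e : ∑ w ∈ XH, z.coeff w = ∑ p ∈ F ×ˢ F, (if p.1 * p.2 ∈ XH then (1:ℚ) else 0) := by
      rw [Finset.sum_congr rfl (fun w _ => zval w), Finset.sum_comm]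
      exact Finset.sum_congr rfl fun p _ => Finset.sum_ite_eq XH (p.1 * p.2) (fun _ => (1:ℚ))
    rw [e, Finset.sum_boole]
    have hsub2 : (F ×ˢ F).filter (fun p => p.1 * p.2 ∈ XH) ⊆ XH ×ˢ XH := by
      intro p hp
      obtain ⟨hpF, hpXH⟩ := Finset.mem_filter.mp hp
      obtain ⟨h1, h2⟩ := Finset.mem_product.mp hpF
      obtain ⟨h'', hprod⟩ := (Finset.mem_filter.mp hpXH).2
      rcases p with ⟨x, y⟩
      rcases x with g | hx <;> rcases y with g' | hy
      · exact absurd hprod (by exact fun hc => nomatch hc)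
      · exact absurd hprod (by exact fun hc => nomatch hc)
      · exact absurd hprod (by exact fun hc => nomatch hc)
      · exact Finset.mem_product.mpr
          ⟨Finset.mem_filter.mpr ⟨h1, ⟨hx, rfl⟩⟩, Finset.mem_filter.mpr ⟨h2, ⟨hy, rfl⟩⟩⟩
    calc (((F ×ˢ F).filter (fun p => p.1 * p.2 ∈ XH)).card : ℚ)
        ≤ ((XH ×ˢ XH).card : ℚ) := by exact_mod_cast Finset.card_le_card hsub2
      _ = (XH.card : ℚ) * XH.card := by rw [Finset.card_product]; push_cast; ring
  have hpos : 0 < XH.card := Finset.card_pos.mpr ⟨_, hh0⟩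
  have h1 : (1:ℚ) ≤ (XH.card : ℚ) := by exact_mod_cast hpos
  rw [hsum] at boundB
  nlinarith [boundA, boundB, h1]

/-- a partition of the stack `G 𝔰 H` is a Schur ring iff each block lies in
the copy of `G` or the copy of `H`, and the blocks in each copy form Schur rings over `G`
and over `H` respectively. -/
theorem stack_schur {G H : Type*} [Semigroup G] [Semigroup H]
    (S : Set (Set (G ⊕ H))) (hS : IsPartition S) :
    IsSchurRing S ↔
      ((∀ X ∈ S, X ⊆ Set.range Sum.inl ∨ X ⊆ Set.range Sum.inr) ∧
        IsSchurRing { A : Set G | Sum.inl '' A ∈ S } ∧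
        IsSchurRing { B : Set H | Sum.inr '' B ∈ S }) := by
  classical
  have hdisj : ∀ (X : Set (G ⊕ H)), X ⊆ Set.range Sum.inr →
      ∀ x ∈ X, x ∉ Set.range (Sum.inl : G → G ⊕ H) := by
    rintro X hXr x hx ⟨g, rfl⟩
    obtain ⟨h, hh⟩ := hXr hx
    exact nomatch hh
  have hdisj' : ∀ (X : Set (G ⊕ H)), X ⊆ Set.range Sum.inl →
      ∀ x ∈ X, x ∉ Set.range (Sum.inr : H → G ⊕ H) := by
    rintro X hXl x hx ⟨h, rfl⟩
    obtain ⟨g, hg⟩ := hXl hx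
    exact nomatch hg
  constructor
  · intro hSR
    have hpure := stack_purity hS hSR
    have hpureL : ∀ X ∈ S, X ⊆ Set.range (Sum.inl : G → G ⊕ H) ∨
        ∀ x ∈ X, x ∉ Set.range (Sum.inl : G → G ⊕ H) := fun X hX =>
      (hpure X hX).imp id (fun h => hdisj X h)
    have hpureR : ∀ X ∈ S, X ⊆ Set.range (Sum.inr : H → G ⊕ H) ∨
        ∀ x ∈ X, x ∉ Set.range (Sum.inr : H → G ⊕ H) := fun X hX =>
      ((hpure X hX).symm).imp id (fun h => hdisj' X h)
    obtain ⟨hGpart, hGmem⟩ := schur_transfer Sum.inl_injective hS hpureL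
    obtain ⟨hHpart, hHmem⟩ := schur_transfer Sum.inr_injective hS hpureR
    refine ⟨hpure, ⟨hGpart, ?_⟩, ⟨hHpart, ?_⟩⟩
    · intro A hA B hB hAf hBf
      refine (hGmem _).mpr ?_
      rw [mapDomain_inl_mul, simpleQty_image Sum.inl_injective hAf,
        simpleQty_image Sum.inl_injective hBf]
      exact hSR.2 _ hA _ hB (hAf.image _) (hBf.image _)
    · intro A hA B hB hAf hBf
      refine (hHmem _).mpr ?_
      rw [mapDomain_inr_mul, simpleQty_image Sum.inr_injective hAf,
        simpleQty_image Sum.inr_injective hBf]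
      exact hSR.2 _ hA _ hB (hAf.image _) (hBf.image _)
  · rintro ⟨hpure, hSG, hSH⟩
    have hpureL : ∀ X ∈ S, X ⊆ Set.range (Sum.inl : G → G ⊕ H) ∨
        ∀ x ∈ X, x ∉ Set.range (Sum.inl : G → G ⊕ H) := fun X hX =>
      (hpure X hX).imp id (fun h => hdisj X h)
    have hpureR : ∀ X ∈ S, X ⊆ Set.range (Sum.inr : H → G ⊕ H) ∨
        ∀ x ∈ X, x ∉ Set.range (Sum.inr : H → G ⊕ H) := fun X hX =>
      ((hpure X hX).symm).imp id (fun h => hdisj' X h)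
    obtain ⟨hGpart, hGmem⟩ := schur_transfer Sum.inl_injective hS hpureL
    obtain ⟨hHpart, hHmem⟩ := schur_transfer Sum.inr_injective hS hpureR
    refine ⟨hS, ?_⟩
    intro X hX Y hY hXf hYf
    rcases hpure X hX with hXl | hXr <;> rcases hpure Y hY with hYl | hYr
    · -- both in G
      set A := Sum.inl ⁻¹' X with hAdef
      set B := Sum.inl ⁻¹' Y with hBdef
      have hXA : Sum.inl '' A = X := Set.image_preimage_eq_of_subset hXl
      have hYB : Sum.inl '' B = Y := Set.image_preimage_eq_of_subset hYl
      have hA : A ∈ {A : Set G | Sum.inl '' A ∈ S} := by rw [Set.mem_setOf_eq, hXA]; exact hX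
      have hB : B ∈ {A : Set G | Sum.inl '' A ∈ S} := by rw [Set.mem_setOf_eq, hYB]; exact hY
      have hAf : A.Finite := hXf.preimage Sum.inl_injective.injOn
      have hBf : B.Finite := hYf.preimage Sum.inl_injective.injOn
      have hEX : (hAf.image Sum.inl).toFinset = hXf.toFinset := by
        ext x
        rw [Set.Finite.mem_toFinset, Set.Finite.mem_toFinset, hXA]
      have hEY : (hBf.image Sum.inl).toFinset = hYf.toFinset := by
        ext x
        rw [Set.Finite.mem_toFinset, Set.Finite.mem_toFinset, hYB]
      have key : simpleQty hXf.toFinset * simpleQty hYf.toFinset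
          = mdQ Sum.inl (simpleQty hAf.toFinset * simpleQty hBf.toFinset) := by
        rw [mapDomain_inl_mul, simpleQty_image Sum.inl_injective hAf,
          simpleQty_image Sum.inl_injective hBf, hEX, hEY]
      rw [key]
      exact (hGmem _).mp (hSG.2 A hA B hB hAf hBf)
    · -- X in G, Y in H
      have key : simpleQty hXf.toFinset * simpleQty hYf.toFinset
          = (hYf.toFinset.card : ℚ) • simpleQty hXf.toFinset := by
        rw [simpleQty_mul]
        have inner : ∀ x ∈ hXf.toFinset,
            ∑ y ∈ hYf.toFinset, MonoidAlgebra.single (x * y) (1:ℚ)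
              = (hYf.toFinset.card : ℚ) • MonoidAlgebra.single x (1:ℚ) := by
          intro x hx
          have hxy : ∀ y ∈ hYf.toFinset,
              MonoidAlgebra.single (x * y) (1:ℚ) = MonoidAlgebra.single x (1:ℚ) := by
            intro y hy
            obtain ⟨g, rfl⟩ := hXl (hXf.mem_toFinset.mp hx)
            obtain ⟨h, rfl⟩ := hYr (hYf.mem_toFinset.mp hy)
            rfl
          rw [Finset.sum_congr rfl hxy, Finset.sum_const, Nat.cast_smul_eq_nsmul ℚ]
        rw [Finset.sum_congr rfl inner, ← Finset.smul_sum, simpleQty]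
      rw [key]
      exact Submodule.smul_mem _ _ (Submodule.subset_span ⟨X, hX, hXf, rfl⟩)
    · -- X in H, Y in G
      have key : simpleQty hXf.toFinset * simpleQty hYf.toFinset
          = (hXf.toFinset.card : ℚ) • simpleQty hYf.toFinset := by
        rw [simpleQty_mul]
        have inner : ∀ x ∈ hXf.toFinset,
            ∑ y ∈ hYf.toFinset, MonoidAlgebra.single (x * y) (1:ℚ)
              = simpleQty hYf.toFinset := by
          intro x hx
          have hxy : ∀ y ∈ hYf.toFinset,
              MonoidAlgebra.single (x * y) (1:ℚ) = MonoidAlgebra.single y (1:ℚ) := by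
            intro y hy
            obtain ⟨h, rfl⟩ := hXr (hXf.mem_toFinset.mp hx)
            obtain ⟨g, rfl⟩ := hYl (hYf.mem_toFinset.mp hy)
            rfl
          rw [Finset.sum_congr rfl hxy, simpleQty]
        rw [Finset.sum_congr rfl inner, Finset.sum_const, Nat.cast_smul_eq_nsmul ℚ]
      rw [key]
      exact Submodule.smul_mem _ _ (Submodule.subset_span ⟨Y, hY, hYf, rfl⟩)
    · -- both in H
      set A := Sum.inr ⁻¹' X with hAdef
      set B := Sum.inr ⁻¹' Y with hBdef
      have hXA : Sum.inr '' A = X := Set.image_preimage_eq_of_subset hXr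
      have hYB : Sum.inr '' B = Y := Set.image_preimage_eq_of_subset hYr
      have hA : A ∈ {B : Set H | Sum.inr '' B ∈ S} := by rw [Set.mem_setOf_eq, hXA]; exact hX
      have hB : B ∈ {B : Set H | Sum.inr '' B ∈ S} := by rw [Set.mem_setOf_eq, hYB]; exact hY
      have hAf : A.Finite := hXf.preimage Sum.inr_injective.injOn
      have hBf : B.Finite := hYf.preimage Sum.inr_injective.injOn
      have hEX : (hAf.image Sum.inr).toFinset = hXf.toFinset := by
        ext x
        rw [Set.Finite.mem_toFinset, Set.Finite.mem_toFinset, hXA]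
      have hEY : (hBf.image Sum.inr).toFinset = hYf.toFinset := by
        ext x
        rw [Set.Finite.mem_toFinset, Set.Finite.mem_toFinset, hYB]
      have key : simpleQty hXf.toFinset * simpleQty hYf.toFinset
          = mdQ Sum.inr (simpleQty hAf.toFinset * simpleQty hBf.toFinset) := by
        rw [mapDomain_inr_mul, simpleQty_image Sum.inr_injective hAf,
          simpleQty_image Sum.inr_injective hBf, hEX, hEY]
      rw [key]
      exact (hHmem _).mp (hSH.2 A hA B hB hAf hBf)
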